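/- Let (p̂_rad,p̂_tan) be an elastic constitutive function for spherically symmetric bodies with â(δ,δ)>0 for all δ>0, satisfying the weak Baker–Ericksen inequality (p̂_tan(δ,η)−p̂_rad(δ,η))/(η−δ) ≥ 0 for all η>δ>0. Let G,K>0 and let δ (with associated η) be a regular solution of the static system on [0,R). Then p̂_tan(δ(r),η(r)) ≥ p̂_rad(δ(r),η(r)) for all r∈(0,R). -/

import Mathlib

/-!
By the weak Baker–Ericksen inequality it suffices to show `δ ≤ η` on `(0, R)`. Put `f = δ - η`;
since `η' = 3 (δ - η) / r`, the static equation reads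
`â δ' r = N - (4πG/3) K² r² η δ < N`, where `N` is the bracket on its right-hand side.

* Where `f = 0`, the bracket `N` vanishes, so gravity forces `f' = δ' < 0`: `f` only crosses
  zero downwards.
* Near the centre `(δ, η) → (δ(0), δ(0))`, and because `p̂_rad = p̂_tan` and
  `∂_η (p̂_rad + 2 p̂_tan) = 0` on the diagonal, `N = o(η - δ)` there. Hence `f > 0` forces
  `δ' r < 3 f`, i.e. `f' < 0`, near `r = 0`.

Since `f → 0` as `r → 0⁺`, `f` can never become positive.
-/

open Real Set Filter Topology

noncomputable section

/-- An elastic constitutive function for spherically symmetric bodies with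
bulk modulus `κ` and Poisson ratio `ν`. -/
def IsElasticConst (κ ν : ℝ) (prad ptan : ℝ → ℝ → ℝ) : Prop :=
  ContDiffOn ℝ 2 (fun p : ℝ × ℝ => prad p.1 p.2) (Ioi 0 ×ˢ Ioi 0) ∧
  ContDiffOn ℝ 2 (fun p : ℝ × ℝ => ptan p.1 p.2) (Ioi 0 ×ˢ Ioi 0) ∧
  (∀ δ : ℝ, 0 < δ → prad δ δ = ptan δ δ) ∧
  (∀ δ : ℝ, 0 < δ → deriv (fun η => prad δ η + 2 * ptan δ η) δ = 0) ∧
  prad 1 1 = 0 ∧ ptan 1 1 = 0 ∧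
  deriv (fun d => prad d 1) 1 = 3 * κ * (1 - ν) / (1 + ν) ∧
  deriv (fun η => prad 1 η) 1 = -(2 * κ * (1 - 2 * ν) / (1 + ν)) ∧
  deriv (fun d => ptan d 1) 1 = 3 * κ * ν / (1 + ν) ∧
  deriv (fun η => ptan 1 η) 1 = κ * (1 - 2 * ν) / (1 + ν)

/-- `â(δ,η) = ∂_δ p̂_rad(δ,η)`. -/
def ahat (prad : ℝ → ℝ → ℝ) (δ η : ℝ) : ℝ := deriv (fun d => prad d η) δ

/-- A regular solution of the static system on `[0,R)`: `δ ∈ C⁰([0,R)) ∩ C¹((0,R))`,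
positive, with `η(r) = (3/r³)∫₀ʳ δ(s)s² ds` for `r ∈ (0,R)`, `η(0) = δ(0)`, and the
static equation `â(δ,η)δ' = [2(p̂_tan − p̂_rad) + 3(η−δ)∂_η p̂_rad]/r − (4πG/3)K²rηδ`. -/
def IsRegularStatic (prad ptan : ℝ → ℝ → ℝ) (G K R : ℝ) (δ η : ℝ → ℝ) : Prop :=
  ContinuousOn δ (Ico 0 R) ∧
  (∀ r ∈ Ioo 0 R, DifferentiableAt ℝ δ r) ∧
  ContinuousOn (deriv δ) (Ioo 0 R) ∧
  (∀ r ∈ Ico 0 R, 0 < δ r) ∧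
  η 0 = δ 0 ∧
  (∀ r ∈ Ioo 0 R, η r = 3 / r ^ 3 * ∫ s in (0:ℝ)..r, δ s * s ^ 2) ∧
  (∀ r ∈ Ioo 0 R,
    ahat prad (δ r) (η r) * deriv δ r =
      (2 * (ptan (δ r) (η r) - prad (δ r) (η r))
        + 3 * (η r - δ r) * deriv (fun e => prad (δ r) e) (η r)) / r
      - (4 * π * G / 3) * K ^ 2 * r * η r * δ r)

theorem exists_zero_forall_pos_of_continuousOn {f : ℝ → ℝ} {a b : ℝ} (hab : a ≤ b)
    (hf : ContinuousOn f (Icc a b)) (ha : f a ≤ 0) (hb : 0 < f b) :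
    ∃ s ∈ Ico a b, f s = 0 ∧ ∀ u ∈ Ioc s b, 0 < f u := by
  set S := Icc a b ∩ f ⁻¹' Iic 0
  have hS : IsCompact S :=
    isCompact_Icc.of_isClosed_subset (hf.preimage_isClosed_of_isClosed isClosed_Icc isClosed_Iic)
      inter_subset_left
  obtain ⟨s, ⟨hs, hfs⟩, hmax⟩ := hS.exists_isGreatest ⟨a, ⟨left_mem_Icc.2 hab, ha⟩⟩
  have hright : ∀ u ∈ Ioc s b, 0 < f u := fun u hu =>
    lt_of_not_ge fun hfu => (hmax ⟨⟨hs.1.trans hu.1.le, hu.2⟩, hfu⟩).not_gt hu.1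
  have hsb : s < b := lt_of_le_of_ne hs.2 fun h => (h ▸ hfs : f b ≤ 0).not_gt hb
  obtain ⟨c, hc, hfc⟩ := intermediate_value_Icc hs.2 (hf.mono (Icc_subset_Icc_left hs.1))
    ⟨hfs, hb.le⟩
  have hcs : c = s := le_antisymm (hmax ⟨⟨hs.1.trans hc.1, hc.2⟩, hfc.le⟩) hc.1
  exact ⟨s, ⟨hs.1, hsb⟩, hcs ▸ hfc, hright⟩

theorem HasDerivAt.eventually_neg_nhdsGT {f : ℝ → ℝ} {f' s : ℝ} (hf : HasDerivAt f f' s)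
    (hf' : f' < 0) (hs : f s = 0) : ∀ᶠ u in 𝓝[>] s, f u < 0 := by
  filter_upwards [(hasDerivAt_iff_tendsto_slope_left_right.mp hf).2.eventually_lt_const hf',
    self_mem_nhdsWithin] with u hslope (hu : s < u)
  rw [slope_def_field, hs, sub_zero, div_lt_iff₀ (sub_pos.2 hu), zero_mul] at hslope
  exact hslope

theorem le_of_tendsto_nhdsGT_of_hasDerivAt_nonpos {f f' : ℝ → ℝ} {a b l : ℝ}
    (hf : ∀ x ∈ Ioo a b, HasDerivAt f (f' x) x) (hf' : ∀ x ∈ Ioo a b, f' x ≤ 0)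
    (hlim : Tendsto f (𝓝[>] a) (𝓝 l)) : ∀ x ∈ Ioo a b, f x ≤ l := by
  have hanti : AntitoneOn f (Ioo a b) := by
    refine antitoneOn_of_hasDerivWithinAt_nonpos (f' := f') (convex_Ioo a b)
      (fun y hy => (hf y hy).continuousAt.continuousWithinAt) (fun y hy => ?_) (fun y hy => ?_)
      <;> rw [interior_Ioo] at hy
    exacts [(hf y hy).hasDerivWithinAt, hf' y hy]
  intro x hx
  refine ge_of_tendsto hlim ?_
  filter_upwards [Ioo_mem_nhdsGT hx.1] with y hy
  exact hanti ⟨hy.1, hy.2.trans hx.2⟩ hx hy.2.le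

theorem nonpos_of_tendsto_nhdsGT_zero_of_hasDerivAt {f f' : ℝ → ℝ} {b : ℝ}
    (hf : ∀ x ∈ Ioo 0 b, HasDerivAt f (f' x) x) (hlim : Tendsto f (𝓝[>] 0) (𝓝 0))
    (hzero : ∀ x ∈ Ioo 0 b, f x = 0 → f' x < 0)
    (hnear : ∀ᶠ x in 𝓝[>] 0, 0 < f x → f' x ≤ 0) :
    ∀ x ∈ Ioo 0 b, f x ≤ 0 := by
  intro x hx
  by_contra! hfx
  -- a last zero of `f` before `x` would be a zero where `f` increases
  have hpos : ∀ t ∈ Ioc 0 x, 0 < f t := by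
    intro t ht
    by_contra! hft
    have hcont : ContinuousOn f (Icc t x) := fun y hy =>
      (hf y ⟨ht.1.trans_le hy.1, hy.2.trans_lt hx.2⟩).continuousAt.continuousWithinAt
    obtain ⟨s, hs, hfs, hright⟩ := exists_zero_forall_pos_of_continuousOn ht.2 hcont hft hfx
    have hsb : s ∈ Ioo 0 b := ⟨ht.1.trans_le hs.1, hs.2.trans hx.2⟩
    obtain ⟨u, hfu, hu⟩ := (((hf s hsb).eventually_neg_nhdsGT (hzero s hsb hfs) hfs).and
      (Ioc_mem_nhdsGT hs.2)).exists
    exact (hright u hu).not_gt hfu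
  obtain ⟨ε, hε, hεsub⟩ := mem_nhdsGT_iff_exists_Ioo_subset.mp hnear
  have hε' : 0 < min ε x := lt_min hε hx.1
  have hsub : Ioo 0 (min ε x) ⊆ Ioo 0 b := Ioo_subset_Ioo_right ((min_le_right _ _).trans hx.2.le)
  have hle := le_of_tendsto_nhdsGT_of_hasDerivAt_nonpos (f' := f')
    (fun y hy => hf y (hsub hy))
    (fun y hy => hεsub (Ioo_subset_Ioo_right (min_le_left _ _) hy)
      (hpos y ⟨hy.1, hy.2.le.trans (min_le_right _ _)⟩)) hlim
  exact (hle _ ⟨half_pos hε', half_lt_self hε'⟩).not_gt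
    (hpos _ ⟨half_pos hε', (half_lt_self hε').le.trans (min_le_right _ _)⟩)

/-- The mean of `x ↦ g ‖x‖` over the ball of radius `r` in `ℝ³`. -/
def radialMean (g : ℝ → ℝ) (r : ℝ) : ℝ := 3 / r ^ 3 * ∫ s in (0:ℝ)..r, g s * s ^ 2

section radialMean

variable {g : ℝ → ℝ} {R : ℝ}

theorem hasDerivAt_integral_mul_sq (hg : ContinuousOn g (Ico 0 R)) {r : ℝ} (hr : r ∈ Ioo 0 R) :
    HasDerivAt (fun r => ∫ s in (0:ℝ)..r, g s * s ^ 2) (g r * r ^ 2) r := by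
  have hcont : ContinuousOn (fun s => g s * s ^ 2) (Ico 0 R) := hg.mul (continuousOn_pow 2)
  refine intervalIntegral.integral_hasDerivAt_right ?_ ?_ ?_
  · refine (hcont.mono ?_).intervalIntegrable
    rw [uIcc_of_le hr.1.le]
    exact Icc_subset_Ico_right hr.2
  · exact (hcont.mono Ioo_subset_Ico_self).stronglyMeasurableAtFilter isOpen_Ioo r hr
  · exact hcont.continuousAt (Ico_mem_nhds hr.1 hr.2)

theorem hasDerivAt_radialMean (hg : ContinuousOn g (Ico 0 R)) {r : ℝ} (hr : r ∈ Ioo 0 R) :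
    HasDerivAt (radialMean g) (3 * (g r - radialMean g r) / r) r := by
  have hr0 : r ≠ 0 := hr.1.ne'
  have hcube := (hasDerivAt_const r (3:ℝ)).div (hasDerivAt_pow 3 r) (pow_ne_zero 3 hr0)
  refine (hcube.mul (hasDerivAt_integral_mul_sq hg hr)).congr_deriv ?_
  simp only [radialMean, Pi.div_apply]
  field_simp
  ring

theorem tendsto_radialMean_nhdsGT (hg : ContinuousOn g (Ico 0 R)) (hR : 0 < R) :
    Tendsto (radialMean g) (𝓝[>] 0) (𝓝 (g 0)) := by
  have hR2 : (0:ℝ) < R / 2 := half_pos hR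
  have hprim : ContinuousOn (fun r => ∫ s in (0:ℝ)..r, g s * s ^ 2) (Ico 0 (R / 2)) := by
    have := intervalIntegral.continuousOn_primitive_interval (μ := MeasureTheory.volume)
      (a := 0) (b := R / 2) (f := fun s => g s * s ^ 2) ?_
    · rw [uIcc_of_le hR2.le] at this
      exact this.mono Ico_subset_Icc_self
    · rw [uIcc_of_le hR2.le]
      exact ((hg.mul (continuousOn_pow 2)).mono
        (Icc_subset_Ico_right (half_lt_self hR))).integrableOn_Icc
  have hcube : ∀ r : ℝ, HasDerivAt (fun r => r ^ 3 / 3) (r ^ 2) r := fun r => by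
    simpa using (hasDerivAt_pow 3 r).div_const 3
  have hlim := HasDerivAt.lhopital_zero_right_on_Ico hR2
    (fun r hr => hasDerivAt_integral_mul_sq hg ⟨hr.1, hr.2.trans (half_lt_self hR)⟩)
    (fun r _ => hcube r) hprim (by fun_prop) (fun r hr => pow_ne_zero 2 hr.1.ne') (by simp)
    (by simp) (l := 𝓝 (g 0)) ?_
  · refine hlim.congr' ?_
    filter_upwards [self_mem_nhdsWithin] with r (hr : 0 < r)
    simp only [radialMean]; field_simp
  · have : Tendsto g (𝓝[>] 0) (𝓝 (g 0)) :=
      ((hg 0 ⟨le_rfl, hR⟩).mono_of_mem_nhdsWithin (Ico_mem_nhdsGT hR)).tendsto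
    refine this.congr' ?_
    filter_upwards [self_mem_nhdsWithin] with r (hr : 0 < r)
    field_simp

end radialMean

open Function (uncurry)

section Partial

variable {f : ℝ → ℝ → ℝ}

theorem HasFDerivAt.hasDerivAt_uncurry_left {L : ℝ × ℝ →L[ℝ] ℝ} {x y : ℝ}
    (hf : HasFDerivAt (uncurry f) L (x, y)) : HasDerivAt (fun y => f x y) (L (0, 1)) y :=
  hf.comp_hasDerivAt y ((hasDerivAt_const y x).prodMk (hasDerivAt_id' y))

theorem HasFDerivAt.hasDerivAt_uncurry_right {L : ℝ × ℝ →L[ℝ] ℝ} {x y : ℝ}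
    (hf : HasFDerivAt (uncurry f) L (x, y)) : HasDerivAt (fun x => f x y) (L (1, 0)) x :=
  (hf.comp_hasDerivAt x ((hasDerivAt_id' x).prodMk (hasDerivAt_const x y)) :)

variable {p : ℝ × ℝ}

theorem ContDiffAt.continuousAt_deriv_uncurry_left (hf : ContDiffAt ℝ 1 (uncurry f) p) :
    ContinuousAt (fun q : ℝ × ℝ => deriv (fun y => f q.1 y) q.2) p := by
  refine ((hf.continuousAt_fderiv one_ne_zero).clm_apply
    (continuousAt_const (y := ((0 : ℝ), (1 : ℝ))))).congr ?_
  filter_upwards [hf.eventually (by simp)] with ⟨x, y⟩ hq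
  exact ((hq.differentiableAt one_ne_zero).hasFDerivAt.hasDerivAt_uncurry_left).deriv.symm

theorem ContDiffAt.continuousAt_deriv_uncurry_right (hf : ContDiffAt ℝ 1 (uncurry f) p) :
    ContinuousAt (fun q : ℝ × ℝ => deriv (fun x => f x q.2) q.1) p := by
  refine ((hf.continuousAt_fderiv one_ne_zero).clm_apply
    (continuousAt_const (y := ((1 : ℝ), (0 : ℝ))))).congr ?_
  filter_upwards [hf.eventually (by simp)] with ⟨x, y⟩ hq
  exact ((hq.differentiableAt one_ne_zero).hasFDerivAt.hasDerivAt_uncurry_right).deriv.symm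

end Partial

def staticNumerator (prad ptan : ℝ → ℝ → ℝ) (d e : ℝ) : ℝ :=
  2 * (ptan d e - prad d e) + 3 * (e - d) * deriv (fun e => prad d e) e

section NearDiagonal

variable {prad ptan : ℝ → ℝ → ℝ} {c : ℝ}

theorem isLittleO_staticNumerator (hprad : ContDiffAt ℝ 1 (uncurry prad) (c, c))
    (hptan : ContDiffAt ℝ 1 (uncurry ptan) (c, c)) (hdiag : ∀ᶠ d in 𝓝 c, prad d d = ptan d d)
    (hdiag' : deriv (fun e => prad c e + 2 * ptan c e) c = 0) :
    (fun p : ℝ × ℝ => staticNumerator prad ptan p.1 p.2) =o[𝓝 (c, c)] fun p => p.2 - p.1 := by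
  set Lr := fderiv ℝ (uncurry prad) (c, c)
  set Lt := fderiv ℝ (uncurry ptan) (c, c)
  have hLr : HasDerivAt (fun e => prad c e) (Lr (0, 1)) c :=
    (hprad.differentiableAt one_ne_zero).hasFDerivAt.hasDerivAt_uncurry_left
  have hLt : HasDerivAt (fun e => ptan c e) (Lt (0, 1)) c :=
    (hptan.differentiableAt one_ne_zero).hasFDerivAt.hasDerivAt_uncurry_left
  have hsum : Lr (0, 1) + 2 * Lt (0, 1) = 0 :=
    (hLr.add (hLt.const_mul 2)).deriv.symm.trans hdiag'
  -- `ptan - prad` vanishes at `(d, d)`, so its strict derivative at `(c, c)` controls it at `(d, e)`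
  have hstrict := ((hptan.hasStrictFDerivAt one_ne_zero).sub
    (hprad.hasStrictFDerivAt one_ne_zero)).isLittleO.comp_tendsto
      (Continuous.tendsto (f := fun p : ℝ × ℝ => (p, (p.1, p.1))) (by fun_prop) (c, c))
  have hW : (fun p : ℝ × ℝ => ptan p.1 p.2 - prad p.1 p.2 - (p.2 - p.1) * (Lt (0, 1) - Lr (0, 1)))
      =o[𝓝 (c, c)] fun p => p.2 - p.1 := by
    have hvec : ∀ p : ℝ × ℝ, p - (p.1, p.1) = (p.2 - p.1) • ((0 : ℝ), (1 : ℝ)) := fun p => by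
      ext <;> simp
    have hO : (fun p : ℝ × ℝ => p - (p.1, p.1)) =O[𝓝 (c, c)] fun p => p.2 - p.1 :=
      Asymptotics.isBigO_of_le _ fun p => by simp [hvec]
    refine (hstrict.trans_isBigO hO).congr' ?_ EventuallyEq.rfl
    filter_upwards [continuous_fst.tendsto (c, c) hdiag] with p (hp : prad p.1 p.1 = ptan p.1 p.1)
    change ptan p.1 p.2 - prad p.1 p.2 - (ptan p.1 p.1 - prad p.1 p.1) - (Lt - Lr) (p - (p.1, p.1))
      = _
    rw [hvec, map_smul, hp, smul_eq_mul, sub_apply]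
    ring
  have hP : (fun p : ℝ × ℝ => (p.2 - p.1) * (deriv (fun e => prad p.1 e) p.2 - Lr (0, 1)))
      =o[𝓝 (c, c)] fun p => p.2 - p.1 := by
    have hcont := hprad.continuousAt_deriv_uncurry_left
    have hlim : Tendsto (fun p : ℝ × ℝ => deriv (fun e => prad p.1 e) p.2 - Lr (0, 1))
        (𝓝 (c, c)) (𝓝 0) := by
      simpa [hLr.deriv] using hcont.tendsto.sub_const (Lr (0, 1))
    simpa using (Asymptotics.isBigO_refl (fun p : ℝ × ℝ => p.2 - p.1) _).mul_isLittleO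
      (Asymptotics.isLittleO_one_iff ℝ |>.mpr hlim)
  refine ((hW.const_mul_left 2).add (hP.const_mul_left 3)).congr_left fun p => ?_
  simp only [staticNumerator]
  linear_combination -(p.2 - p.1) * hsum

theorem eventually_staticNumerator_lt (hprad : ContDiffAt ℝ 1 (uncurry prad) (c, c))
    (hptan : ContDiffAt ℝ 1 (uncurry ptan) (c, c)) (hdiag : ∀ᶠ d in 𝓝 c, prad d d = ptan d d)
    (hdiag' : deriv (fun e => prad c e + 2 * ptan c e) c = 0) (ha : 0 < ahat prad c c) :
    ∀ᶠ p : ℝ × ℝ in 𝓝 (c, c), 0 < ahat prad p.1 p.2 ∧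
      (p.2 < p.1 → staticNumerator prad ptan p.1 p.2 < 3 * (p.1 - p.2) * ahat prad p.1 p.2) := by
  have hA : ∀ᶠ p : ℝ × ℝ in 𝓝 (c, c), ahat prad c c / 3 < ahat prad p.1 p.2 :=
    hprad.continuousAt_deriv_uncurry_right.eventually_const_lt (div_lt_self ha (by norm_num))
  filter_upwards [hA, (isLittleO_staticNumerator hprad hptan hdiag hdiag').bound ha]
    with p hA hN
  refine ⟨by linarith, fun hlt => ?_⟩
  rw [Real.norm_eq_abs, Real.norm_eq_abs, abs_of_neg (sub_neg.2 hlt)] at hN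
  nlinarith [le_abs_self (staticNumerator prad ptan p.1 p.2)]

end NearDiagonal

namespace IsRegularStatic

variable {prad ptan : ℝ → ℝ → ℝ} {G K R : ℝ} {δ η : ℝ → ℝ}

theorem hasDerivAt_eta (h : IsRegularStatic prad ptan G K R δ η) {r : ℝ} (hr : r ∈ Ioo 0 R) :
    HasDerivAt η (3 * (δ r - η r) / r) r := by
  obtain ⟨hδ, -, -, -, -, hη, -⟩ := h
  rw [hη r hr]
  exact (hasDerivAt_radialMean hδ hr).congr_of_eventuallyEq
    (eventuallyEq_of_mem (Ioo_mem_nhds hr.1 hr.2) fun x hx => hη x hx)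

theorem tendsto_delta (h : IsRegularStatic prad ptan G K R δ η) (hR : 0 < R) :
    Tendsto δ (𝓝[>] 0) (𝓝 (δ 0)) :=
  ((h.1 0 ⟨le_rfl, hR⟩).mono_of_mem_nhdsWithin (Ico_mem_nhdsGT hR)).tendsto

theorem tendsto_eta (h : IsRegularStatic prad ptan G K R δ η) (hR : 0 < R) :
    Tendsto η (𝓝[>] 0) (𝓝 (δ 0)) := by
  obtain ⟨hδ, -, -, -, -, hη, -⟩ := h
  exact (tendsto_radialMean_nhdsGT hδ hR).congr'
    (eventuallyEq_of_mem (Ioo_mem_nhdsGT hR) fun r hr => (hη r hr).symm)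

theorem ahat_mul_deriv_mul_lt (h : IsRegularStatic prad ptan G K R δ η) (hG : 0 < G)
    (hK : K ≠ 0) {r : ℝ} (hr : r ∈ Ioo 0 R) (hη : 0 < η r) :
    ahat prad (δ r) (η r) * deriv δ r * r < staticNumerator prad ptan (δ r) (η r) := by
  obtain ⟨-, -, -, hpos, -, -, hode⟩ := h
  have hδ : 0 < δ r := hpos r ⟨hr.1.le, hr.2⟩
  have hgrav : 0 < 4 * π * G / 3 * K ^ 2 * r * η r * δ r := by
    have := hr.1; positivity
  have hode : ahat prad (δ r) (η r) * deriv δ r * r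
      = staticNumerator prad ptan (δ r) (η r) - 4 * π * G / 3 * K ^ 2 * r * η r * δ r * r := by
    rw [hode r hr, staticNumerator]
    field_simp [hr.1.ne']
  rw [hode]
  linarith [mul_pos hgrav hr.1]

theorem deriv_delta_neg_of_eta_eq (h : IsRegularStatic prad ptan G K R δ η)
    (hdiag : ∀ d : ℝ, 0 < d → prad d d = ptan d d) (ha : ∀ d : ℝ, 0 < d → 0 < ahat prad d d)
    (hG : 0 < G) (hK : K ≠ 0) {r : ℝ} (hr : r ∈ Ioo 0 R) (hηr : η r = δ r) :
    deriv δ r < 0 := by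
  have hδ : 0 < δ r := h.2.2.2.1 r ⟨hr.1.le, hr.2⟩
  have hlt := h.ahat_mul_deriv_mul_lt hG hK hr (hηr ▸ hδ)
  rw [hηr, staticNumerator, hdiag _ hδ, sub_self, sub_self, mul_zero, mul_zero, zero_mul,
    add_zero] at hlt
  by_contra! hδ'
  nlinarith [mul_nonneg (mul_nonneg (ha _ hδ).le hδ') hr.1.le]

theorem eventually_deriv_delta_mul_lt (h : IsRegularStatic prad ptan G K R δ η)
    (hprad : ContDiffOn ℝ 1 (uncurry prad) (Ioi 0 ×ˢ Ioi 0))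
    (hptan : ContDiffOn ℝ 1 (uncurry ptan) (Ioi 0 ×ˢ Ioi 0))
    (hdiag : ∀ d : ℝ, 0 < d → prad d d = ptan d d)
    (hdiag' : ∀ d : ℝ, 0 < d → deriv (fun e => prad d e + 2 * ptan d e) d = 0)
    (ha : ∀ d : ℝ, 0 < d → 0 < ahat prad d d) (hG : 0 < G) (hK : K ≠ 0) (hR : 0 < R) :
    ∀ᶠ r in 𝓝[>] 0, η r < δ r → deriv δ r * r < 3 * (δ r - η r) := by
  have hδ0 : 0 < δ 0 := h.2.2.2.1 0 ⟨le_rfl, hR⟩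
  have hU : Ioi (0 : ℝ) ×ˢ Ioi (0 : ℝ) ∈ 𝓝 (δ 0, δ 0) :=
    prod_mem_nhds (Ioi_mem_nhds hδ0) (Ioi_mem_nhds hδ0)
  have hnum := eventually_staticNumerator_lt (hprad.contDiffAt hU) (hptan.contDiffAt hU)
    (eventually_gt_nhds hδ0 |>.mono hdiag) (hdiag' _ hδ0) (ha _ hδ0)
  filter_upwards [(h.tendsto_delta hR).prodMk_nhds (h.tendsto_eta hR) hnum,
    (h.tendsto_eta hR).eventually (eventually_gt_nhds hδ0), Ioo_mem_nhdsGT hR]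
    with r ⟨hA, hN⟩ hηr hr hlt
  have := h.ahat_mul_deriv_mul_lt hG hK hr hηr
  nlinarith [hN hlt]

theorem le_eta (h : IsRegularStatic prad ptan G K R δ η)
    (hprad : ContDiffOn ℝ 1 (uncurry prad) (Ioi 0 ×ˢ Ioi 0))
    (hptan : ContDiffOn ℝ 1 (uncurry ptan) (Ioi 0 ×ˢ Ioi 0))
    (hdiag : ∀ d : ℝ, 0 < d → prad d d = ptan d d)
    (hdiag' : ∀ d : ℝ, 0 < d → deriv (fun e => prad d e + 2 * ptan d e) d = 0)
    (ha : ∀ d : ℝ, 0 < d → 0 < ahat prad d d) (hG : 0 < G) (hK : K ≠ 0) :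
    ∀ r ∈ Ioo 0 R, δ r ≤ η r := by
  intro r hr
  have hR : 0 < R := hr.1.trans hr.2
  have hzero : ∀ x ∈ Ioo 0 R, δ x - η x = 0 → deriv δ x - 3 * (δ x - η x) / x < 0 :=
    fun x hx hfx => by
      rw [hfx, mul_zero, zero_div, sub_zero]
      exact h.deriv_delta_neg_of_eta_eq hdiag ha hG hK hx (by linarith)
  have hnear : ∀ᶠ x in 𝓝[>] 0, 0 < δ x - η x → deriv δ x - 3 * (δ x - η x) / x ≤ 0 := by
    filter_upwards [h.eventually_deriv_delta_mul_lt hprad hptan hdiag hdiag' ha hG hK hR,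
      self_mem_nhdsWithin] with x hx (hx0 : 0 < x) hfx
    rw [sub_nonpos, le_div_iff₀ hx0]
    exact (hx (by linarith)).le
  have := nonpos_of_tendsto_nhdsGT_zero_of_hasDerivAt (f := fun x => δ x - η x)
    (fun x hx => (h.2.1 x hx).hasDerivAt.sub (h.hasDerivAt_eta hx))
    (by simpa using (h.tendsto_delta hR).sub (h.tendsto_eta hR)) hzero hnear r hr
  exact sub_nonpos.mp this

end IsRegularStatic

theorem regular_static_ptan_ge_prad_general (κ ν G K R : ℝ)
    (hG : 0 < G) (hK : 0 < K)
    (prad ptan : ℝ → ℝ → ℝ) (helastic : IsElasticConst κ ν prad ptan)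
    (ha : ∀ d : ℝ, 0 < d → 0 < ahat prad d d)
    (hBE : ∀ d e : ℝ, 0 < d → d < e → 0 ≤ (ptan d e - prad d e) / (e - d))
    (δ η : ℝ → ℝ) (hreg : IsRegularStatic prad ptan G K R δ η) :
    ∀ r ∈ Ioo 0 R, prad (δ r) (η r) ≤ ptan (δ r) (η r) := by
  obtain ⟨hprad, hptan, hdiag, hdiag', -⟩ := helastic
  intro r hr
  have hδ : 0 < δ r := hreg.2.2.2.1 r ⟨hr.1.le, hr.2⟩
  rcases (hreg.le_eta (hprad.of_le one_le_two) (hptan.of_le one_le_two) hdiag hdiag' ha hG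
    hK.ne' r hr).lt_or_eq with hlt | heq
  · have := (le_div_iff₀ (sub_pos.2 hlt)).1 (hBE _ _ hδ hlt)
    linarith
  · rw [← heq, hdiag _ hδ]

/-- If `â(δ,δ) > 0` for all `δ > 0` and the weak Baker–Ericksen inequality holds, then
along any regular static solution `p̂_tan(δ(r),η(r)) ≥ p̂_rad(δ(r),η(r))` on `(0,R)`. -/
theorem regular_static_ptan_ge_prad (κ ν G K R : ℝ) (hκ : 0 < κ)
    (hν : ν ∈ Ioc (-1 : ℝ) (1/2)) (hG : 0 < G) (hK : 0 < K) (hR : 0 < R)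
    (prad ptan : ℝ → ℝ → ℝ) (helastic : IsElasticConst κ ν prad ptan)
    (ha : ∀ d : ℝ, 0 < d → 0 < ahat prad d d)
    (hBE : ∀ d e : ℝ, 0 < d → d < e → 0 ≤ (ptan d e - prad d e) / (e - d))
    (δ η : ℝ → ℝ) (hreg : IsRegularStatic prad ptan G K R δ η) :
    ∀ r ∈ Ioo 0 R, prad (δ r) (η r) ≤ ptan (δ r) (η r) :=
  regular_static_ptan_ge_prad_general κ ν G K R hG hK prad ptan helastic ha hBE δ η hreg
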